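/- arXiv:1402.0810 — 2 statements merged into one kernel-verified Lean document; each statement's English description precedes it below -/
import Mathlib

section
/- Let A = {P^A_i} and B = {P^B_j} be projective observables on ℂ^d. Then Q_∞(A→B) = 0 if and only if P^A_i P^B_j = P^B_j P^A_i for all i and j. -/
/-!
The two distributions differ by an expectation value:
`q(j) - p(j) = Re tr ((∑ i, P i * Q j * P i - Q j) * ρ)`, and both lie in `[0, 1]`, so `Q_∞` is a
genuine supremum and vanishes exactly when these expectations vanish for every state. A Hermitian
matrix with vanishing expectation in every state (in particular every pure state `|v⟩⟨v|`) is
zero, so `Q_∞ = 0` means `∑ i, P i * Q j * P i = Q j` for all `j`. Multiplying this identity by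
`P i` on the left and on the right, orthogonality of the `P k` turns both sides into
`P i * Q j * P i`, which is commutation; conversely commuting projections give back the identity.
-/

open scoped BigOperators ComplexOrder
open Matrix

noncomputable section

/-- A projective observable: a finite family of mutually orthogonal
self-adjoint idempotents summing to the identity. -/
def IsProjObs {d r : ℕ} (P : Fin r → Matrix (Fin d) (Fin d) ℂ) : Prop :=
  (∀ i, (P i).IsHermitian) ∧ (∀ i, P i * P i = P i) ∧
    (∀ i k, i ≠ k → P i * P k = 0) ∧ (∑ i, P i = 1)

/-- A density matrix: positive semidefinite with unit trace. -/
def IsDensity {d : ℕ} (ρ : Matrix (Fin d) (Fin d) ℂ) : Prop :=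
  ρ.PosSemidef ∧ ρ.trace = 1

/-- The measurement channel `E^A(ρ) = Σ_i P_i ρ P_i` of a projective observable. -/
def measChannel {d r : ℕ} (P : Fin r → Matrix (Fin d) (Fin d) ℂ)
    (ρ : Matrix (Fin d) (Fin d) ℂ) : Matrix (Fin d) (Fin d) ℂ :=
  ∑ i, P i * ρ * P i

/-- `p^B_ρ(j) = tr(P^B_j ρ)`. -/
def probB {d rB : ℕ} (Q : Fin rB → Matrix (Fin d) (Fin d) ℂ)
    (ρ : Matrix (Fin d) (Fin d) ℂ) (j : Fin rB) : ℝ :=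
  ((Q j * ρ).trace).re

/-- `q^{A→B}_ρ(j) = tr(P^B_j Σ_i P^A_i ρ P^A_i)`. -/
def probAB {d rA rB : ℕ} (P : Fin rA → Matrix (Fin d) (Fin d) ℂ)
    (Q : Fin rB → Matrix (Fin d) (Fin d) ℂ)
    (ρ : Matrix (Fin d) (Fin d) ℂ) (j : Fin rB) : ℝ :=
  ((Q j * measChannel P ρ).trace).re

open Classical in
/-- The positive semidefinite square root of a PSD matrix (junk value `0` otherwise). -/
noncomputable def msqrt {d : ℕ} (A : Matrix (Fin d) (Fin d) ℂ) :
    Matrix (Fin d) (Fin d) ℂ :=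
  if h : A.PosSemidef then (h.1.eigenvectorUnitary : Matrix (Fin d) (Fin d) ℂ) *
    diagonal ((↑) ∘ (Real.sqrt ·) ∘ h.1.eigenvalues) *
    (star h.1.eigenvectorUnitary : Matrix (Fin d) (Fin d) ℂ) else 0

/-- `|X| = √(Xᴴ X)`, the positive semidefinite absolute value of a matrix. -/
noncomputable def matAbs {d : ℕ} (X : Matrix (Fin d) (Fin d) ℂ) :
    Matrix (Fin d) (Fin d) ℂ :=
  msqrt (Xᴴ * X)

/-- The quantum fidelity `F(ρ,σ) = tr √(√ρ σ √ρ)`. -/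
noncomputable def qFid {d : ℕ} (ρ σ : Matrix (Fin d) (Fin d) ℂ) : ℝ :=
  ((msqrt (msqrt ρ * σ * msqrt ρ)).trace).re

/-- Variational distance `D_1(p,q) = (1/2) Σ_j |p_j − q_j|`. -/
def distL1 {rB : ℕ} (p q : Fin rB → ℝ) : ℝ := (1 / 2) * ∑ j, |p j - q j|

/-- Chebyshev distance `D_∞(p,q) = max_j |p_j − q_j|`. -/
noncomputable def distLinf {rB : ℕ} (p q : Fin rB → ℝ) : ℝ := ⨆ j, |p j - q j|

/-- Classical fidelity `F(p,q) = Σ_j √(p_j q_j)`. -/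
noncomputable def classFid {rB : ℕ} (p q : Fin rB → ℝ) : ℝ :=
  ∑ j, Real.sqrt (p j * q j)

/-- `Q_1(A→B)`. -/
noncomputable def Q1 {d rA rB : ℕ} (P : Fin rA → Matrix (Fin d) (Fin d) ℂ)
    (Q : Fin rB → Matrix (Fin d) (Fin d) ℂ) : ℝ :=
  sSup {x : ℝ | ∃ ρ, IsDensity ρ ∧ x = distL1 (probAB P Q ρ) (probB Q ρ)}

/-- `Q_∞(A→B)`. -/
noncomputable def Qinf {d rA rB : ℕ} (P : Fin rA → Matrix (Fin d) (Fin d) ℂ)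
    (Q : Fin rB → Matrix (Fin d) (Fin d) ℂ) : ℝ :=
  sSup {x : ℝ | ∃ ρ, IsDensity ρ ∧ x = distLinf (probAB P Q ρ) (probB Q ρ)}

/-- `Q_F(A→B)`. -/
noncomputable def QF {d rA rB : ℕ} (P : Fin rA → Matrix (Fin d) (Fin d) ℂ)
    (Q : Fin rB → Matrix (Fin d) (Fin d) ℂ) : ℝ :=
  sSup {x : ℝ | ∃ ρ, IsDensity ρ ∧
    x = 1 - (classFid (probAB P Q ρ) (probB Q ρ)) ^ 2}

/-- The rank-one projection `|v⟩⟨v|` onto a (unit) vector `v`. -/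
def proj {d : ℕ} (v : Fin d → ℂ) : Matrix (Fin d) (Fin d) ℂ :=
  Matrix.vecMulVec v (star v)

namespace Matrix

variable {n 𝕜 : Type*} [Fintype n] [RCLike 𝕜]

theorem trace_mul_vecMulVec_star (N : Matrix n n 𝕜) (v : n → 𝕜) :
    (N * vecMulVec v (star v)).trace = star v ⬝ᵥ (N *ᵥ v) := by
  rw [mul_vecMulVec, trace_vecMulVec, dotProduct_comm]

open scoped MatrixOrder in
theorem IsHermitian.eq_zero_of_forall_re_trace_mul_eq_zero {N : Matrix n n 𝕜}
    (hN : N.IsHermitian) (h : ∀ ρ : Matrix n n 𝕜, ρ.PosSemidef → RCLike.re (N * ρ).trace = 0) :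
    N = 0 := by
  have hquad (v : n → 𝕜) : star v ⬝ᵥ (N *ᵥ v) = 0 := by
    refine RCLike.ext ?_ (by simpa using hN.im_star_dotProduct_mulVec_self v)
    simpa [trace_mul_vecMulVec_star] using h _ (posSemidef_vecMulVec_self_star v)
  refine le_antisymm ?_ ?_
  · exact PosSemidef.of_dotProduct_mulVec_nonneg (by simpa using hN.neg)
      fun v ↦ by simp [neg_mulVec, hquad]
  · exact PosSemidef.of_dotProduct_mulVec_nonneg (by simpa using hN)
      fun v ↦ by simp [hquad]

end Matrix

section

variable {d : ℕ}

theorem Matrix.PosSemidef.isDensity_trace_inv_smul {ρ : Matrix (Fin d) (Fin d) ℂ}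
    (hρ : ρ.PosSemidef) (h0 : ρ ≠ 0) : IsDensity (ρ.trace⁻¹ • ρ) := by
  have htr : ρ.trace ≠ 0 := hρ.trace_eq_zero_iff.not.mpr h0
  refine ⟨hρ.smul (RCLike.inv_pos.mpr (hρ.trace_nonneg.lt_of_ne htr.symm)).le, ?_⟩
  rw [trace_smul, smul_eq_mul, inv_mul_cancel₀ htr]

theorem re_trace_mul_eq_zero_of_forall_isDensity {N ρ : Matrix (Fin d) (Fin d) ℂ}
    (h : ∀ σ, IsDensity σ → (N * σ).trace.re = 0) (hρ : ρ.PosSemidef) :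
    (N * ρ).trace.re = 0 := by
  obtain rfl | h0 := eq_or_ne ρ 0
  · simp
  have hre : ρ = ρ.trace • (ρ.trace⁻¹ • ρ) := by
    rw [smul_smul, mul_inv_cancel₀ (hρ.trace_eq_zero_iff.not.mpr h0), one_smul]
  rw [hre, mul_smul_comm, trace_smul, smul_eq_mul, Complex.mul_re,
    h _ (hρ.isDensity_trace_inv_smul h0), (Complex.nonneg_iff.mp hρ.trace_nonneg).2.symm]
  ring

theorem Matrix.IsHermitian.eq_zero_of_forall_isDensity {N : Matrix (Fin d) (Fin d) ℂ}
    (hN : N.IsHermitian) (h : ∀ ρ, IsDensity ρ → (N * ρ).trace.re = 0) : N = 0 :=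
  hN.eq_zero_of_forall_re_trace_mul_eq_zero fun _ ↦ re_trace_mul_eq_zero_of_forall_isDensity h

theorem Matrix.trace_mul_mul_self_of_isIdempotentElem {n R : Type*} [Fintype n] [CommSemiring R]
    {E : Matrix n n R} (hE : IsIdempotentElem E) (ρ : Matrix n n R) :
    (E * ρ * E).trace = (E * ρ).trace := by
  rw [trace_mul_comm, ← Matrix.mul_assoc, hE.eq]

theorem trace_mul_measChannel {r : ℕ} (P : Fin r → Matrix (Fin d) (Fin d) ℂ)
    (X ρ : Matrix (Fin d) (Fin d) ℂ) :
    (X * measChannel P ρ).trace = ((∑ i, P i * X * P i) * ρ).trace := by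
  simp only [measChannel, Finset.mul_sum, Finset.sum_mul, trace_sum]
  refine Finset.sum_congr rfl fun i _ ↦ ?_
  rw [← Matrix.mul_assoc, trace_mul_comm, ← Matrix.mul_assoc, ← Matrix.mul_assoc]

namespace IsProjObs

variable {r : ℕ} {P : Fin r → Matrix (Fin d) (Fin d) ℂ}

theorem sum_trace_mul (hP : IsProjObs P) (ρ : Matrix (Fin d) (Fin d) ℂ) :
    ∑ i, (P i * ρ).trace = ρ.trace := by
  rw [← trace_sum, ← Finset.sum_mul, hP.2.2.2, Matrix.one_mul]

theorem re_trace_mul_nonneg (hP : IsProjObs P) {ρ : Matrix (Fin d) (Fin d) ℂ}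
    (hρ : ρ.PosSemidef) (i : Fin r) : 0 ≤ (P i * ρ).trace.re := by
  have hconj := hρ.conjTranspose_mul_mul_same (P i)
  rw [(hP.1 i).eq] at hconj
  rw [← trace_mul_mul_self_of_isIdempotentElem (hP.2.1 i)]
  exact (Complex.nonneg_iff.mp hconj.trace_nonneg).1

theorem isDensity_measChannel (hP : IsProjObs P) {ρ : Matrix (Fin d) (Fin d) ℂ}
    (hρ : IsDensity ρ) : IsDensity (measChannel P ρ) := by
  refine ⟨posSemidef_sum _ fun i _ ↦ ?_, ?_⟩
  · simpa only [(hP.1 i).eq] using hρ.1.conjTranspose_mul_mul_same (P i)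
  · simp only [measChannel, trace_sum, trace_mul_mul_self_of_isIdempotentElem (hP.2.1 _),
      hP.sum_trace_mul, hρ.2]

theorem probB_mem_Icc (hP : IsProjObs P) {ρ : Matrix (Fin d) (Fin d) ℂ} (hρ : IsDensity ρ)
    (i : Fin r) : probB P ρ i ∈ Set.Icc 0 1 := by
  have hsum : ∑ k, probB P ρ k = 1 := by
    simp only [probB, ← Complex.re_sum, hP.sum_trace_mul, hρ.2, Complex.one_re]
  refine ⟨hP.re_trace_mul_nonneg hρ.1 i, hsum ▸ ?_⟩
  exact Finset.single_le_sum (fun k _ ↦ hP.re_trace_mul_nonneg hρ.1 k) (Finset.mem_univ i)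

theorem isHermitian_sum_mul_mul (hP : IsProjObs P) {X : Matrix (Fin d) (Fin d) ℂ}
    (hX : X.IsHermitian) : (∑ i, P i * X * P i).IsHermitian :=
  isSelfAdjoint_sum _ fun i _ ↦ by
    have h := isHermitian_conjTranspose_mul_mul (P i) hX
    rwa [(hP.1 i).eq] at h

theorem mul_sum_mul_mul (hP : IsProjObs P) (X : Matrix (Fin d) (Fin d) ℂ) (i : Fin r) :
    P i * ∑ k, P k * X * P k = P i * X * P i := by
  rw [Finset.mul_sum, Finset.sum_eq_single i (fun k _ hk ↦ by
    rw [← Matrix.mul_assoc, ← Matrix.mul_assoc, hP.2.2.1 i k hk.symm]; simp)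
    (by simp), ← Matrix.mul_assoc, ← Matrix.mul_assoc, hP.2.1 i]

theorem sum_mul_mul_mul (hP : IsProjObs P) (X : Matrix (Fin d) (Fin d) ℂ) (i : Fin r) :
    (∑ k, P k * X * P k) * P i = P i * X * P i := by
  rw [Finset.sum_mul, Finset.sum_eq_single i (fun k _ hk ↦ by
    rw [Matrix.mul_assoc, hP.2.2.1 k i hk]; simp)
    (by simp), Matrix.mul_assoc, hP.2.1 i]

theorem sum_mul_mul_eq_self_iff (hP : IsProjObs P) (X : Matrix (Fin d) (Fin d) ℂ) :
    ∑ i, P i * X * P i = X ↔ ∀ i, P i * X = X * P i := by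
  refine ⟨fun h i ↦ ?_, fun h ↦ ?_⟩
  · rw [← h, hP.mul_sum_mul_mul, hP.sum_mul_mul_mul]
  · simp_rw [h, Matrix.mul_assoc, hP.2.1, ← Finset.mul_sum, hP.2.2.2, Matrix.mul_one]

end IsProjObs

section distLinf

variable {r : ℕ} (p q : Fin r → ℝ)

theorem abs_sub_le_distLinf (i : Fin r) : |p i - q i| ≤ distLinf p q :=
  le_ciSup (f := fun i ↦ |p i - q i|) (Set.finite_range _).bddAbove i

theorem distLinf_self : distLinf p p = 0 := by
  simp [distLinf]

theorem distLinf_nonpos_iff : distLinf p q ≤ 0 ↔ p = q := by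
  refine ⟨fun h ↦ funext fun i ↦ ?_, ?_⟩
  · exact sub_eq_zero.mp (abs_nonpos_iff.mp ((abs_sub_le_distLinf p q i).trans h))
  · rintro rfl
    exact (distLinf_self p).le

theorem distLinf_le_one {p q : Fin r → ℝ} (hp : ∀ i, p i ∈ Set.Icc 0 1)
    (hq : ∀ i, q i ∈ Set.Icc 0 1) : distLinf p q ≤ 1 :=
  Real.iSup_le (fun i ↦ abs_sub_le_of_nonneg_of_le (hp i).1 (hp i).2 (hq i).1 (hq i).2)
    zero_le_one

end distLinf

variable {rA rB : ℕ} {P : Fin rA → Matrix (Fin d) (Fin d) ℂ} {Q : Fin rB → Matrix (Fin d) (Fin d) ℂ}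

theorem distLinf_le_Qinf (hP : IsProjObs P) (hQ : IsProjObs Q) {ρ : Matrix (Fin d) (Fin d) ℂ}
    (hρ : IsDensity ρ) : distLinf (probAB P Q ρ) (probB Q ρ) ≤ Qinf P Q := by
  refine le_csSup ⟨1, ?_⟩ ⟨ρ, hρ, rfl⟩
  rintro _ ⟨σ, hσ, rfl⟩
  exact distLinf_le_one (hQ.probB_mem_Icc (hP.isDensity_measChannel hσ)) (hQ.probB_mem_Icc hσ)

theorem Qinf_eq_zero_iff (hP : IsProjObs P) (hQ : IsProjObs Q) :
    Qinf P Q = 0 ↔ ∀ ρ, IsDensity ρ → probAB P Q ρ = probB Q ρ := by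
  refine ⟨fun h ρ hρ ↦ (distLinf_nonpos_iff _ _).mp (h ▸ distLinf_le_Qinf hP hQ hρ), fun h ↦ ?_⟩
  refine le_antisymm (Real.sSup_nonpos ?_) (Real.sSup_nonneg ?_) <;>
    rintro _ ⟨ρ, hρ, rfl⟩ <;> simp [h ρ hρ, distLinf_self]

theorem probAB_eq_probB_iff (hP : IsProjObs P) (hQ : IsProjObs Q) :
    (∀ ρ, IsDensity ρ → probAB P Q ρ = probB Q ρ) ↔ ∀ j, ∑ i, P i * Q j * P i = Q j := by
  have hdiff (ρ) (j) :
      probAB P Q ρ j - probB Q ρ j = (((∑ i, P i * Q j * P i) - Q j) * ρ).trace.re := by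
    rw [probAB, probB, trace_mul_measChannel, Matrix.sub_mul, trace_sub, Complex.sub_re]
  refine ⟨fun h j ↦ sub_eq_zero.mp ?_, fun h ρ _ ↦ funext fun j ↦ sub_eq_zero.mp ?_⟩
  · refine ((hP.isHermitian_sum_mul_mul (hQ.1 j)).sub (hQ.1 j)).eq_zero_of_forall_isDensity ?_
    intro ρ hρ
    rw [← hdiff, h ρ hρ, sub_self]
  · rw [hdiff, h j, sub_self, Matrix.zero_mul, trace_zero, Complex.zero_re]

end

theorem stmt_3_general {d rA rB : ℕ}
    (P : Fin rA → Matrix (Fin d) (Fin d) ℂ) (Q : Fin rB → Matrix (Fin d) (Fin d) ℂ)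
    (hP : IsProjObs P) (hQ : IsProjObs Q) :
    Qinf P Q = 0 ↔ (∀ i j, P i * Q j = Q j * P i) := by
  rw [Qinf_eq_zero_iff hP hQ, probAB_eq_probB_iff hP hQ, forall_comm]
  exact forall_congr' fun j ↦ hP.sum_mul_mul_eq_self_iff (Q j)

theorem stmt_3 {d rA rB : ℕ} (hd : 0 < d)
    (P : Fin rA → Matrix (Fin d) (Fin d) ℂ) (Q : Fin rB → Matrix (Fin d) (Fin d) ℂ)
    (hP : IsProjObs P) (hQ : IsProjObs Q) :
    Qinf P Q = 0 ↔ (∀ i j, P i * Q j = Q j * P i) :=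
  stmt_3_general P Q hP hQ
end
end

section
/- Let A = {A_i}_{i=1}^{N_A} and B = {B_j}_{j=1}^{N_B} be discrete POVMs on ℂ^d, and let Φ^A_L be the Lüders channel of A. Then the fidelity-based incompatibility satisfies Q_F(Φ^A_L → Φ^B_L) = sup over density matrices ρ of [1 − (Σ_j √(tr(B_j Φ^A_L(ρ)) · tr(B_j ρ)))²] ≤ 1 − 1/N_A. -/
/-!
For `0 ≤ A_i ≤ 1` we have `A_i ≤ √A_i`, so for a state `ρ`
`1 = Σ_i tr(A_i ρ) ≤ Σ_i Re tr(√A_i ρ) = Σ_i Σ_j Re tr(B_j √A_i ρ)`.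
Cauchy–Schwarz for the semi-inner product `⟪X, Y⟫ = tr(Y ρ Xᴴ)`, applied to `√B_j` and
`√B_j √A_i`, bounds each term by
`√(tr(B_j ρ)) · √(tr(B_j √A_i ρ √A_i))`, and Cauchy–Schwarz over `i` bounds the sum over `i` of
the second factor by `√N_A · √(tr(B_j Φ^A_L(ρ)))`. Hence `1 ≤ √N_A · F`, where `F` is the
classical fidelity of the two outcome distributions of `B`, i.e. `1 - F² ≤ 1 - 1/N_A`.
-/

open scoped BigOperators ComplexOrder
open Matrix

noncomputable section

/-- A discrete POVM: positive semidefinite effects summing to the identity. -/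
def IsPOVM {d N : ℕ} (A : Fin N → Matrix (Fin d) (Fin d) ℂ) : Prop :=
  (∀ i, (A i).PosSemidef) ∧ ∑ i, A i = 1

/-- The Lüders channel `Φ^A_L(ρ) = Σ_i √A_i ρ √A_i` of a POVM. -/
noncomputable def luders {d N : ℕ} (A : Fin N → Matrix (Fin d) (Fin d) ℂ)
    (ρ : Matrix (Fin d) (Fin d) ℂ) : Matrix (Fin d) (Fin d) ℂ :=
  ∑ i, msqrt (A i) * ρ * msqrt (A i)

open scoped MatrixOrder

section TraceInequalities

variable {n 𝕜 : Type*} [RCLike 𝕜] [Fintype n]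

lemma Matrix.PosSemidef.re_trace_mul_nonneg {M ρ : Matrix n n 𝕜} (hM : M.PosSemidef)
    (hρ : ρ.PosSemidef) : 0 ≤ RCLike.re (M * ρ).trace := by
  classical
  obtain ⟨C, rfl⟩ := CStarAlgebra.nonneg_iff_eq_star_mul_self.mp hM.nonneg
  rw [star_eq_conjTranspose, Matrix.mul_assoc, trace_mul_comm]
  exact (RCLike.nonneg_iff.mp (hρ.mul_mul_conjTranspose_same C).trace_nonneg).1

lemma Matrix.PosSemidef.norm_trace_mul_mul_conjTranspose_le {M : Matrix n n 𝕜}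
    (hM : M.PosSemidef) (X Y : Matrix n n 𝕜) :
    ‖(Y * M * Xᴴ).trace‖ ≤
      √(RCLike.re (X * M * Xᴴ).trace) * √(RCLike.re (Y * M * Yᴴ).trace) := by
  let := M.toMatrixSeminormedAddCommGroup hM
  let := M.toMatrixInnerProductSpace hM
  exact norm_inner_le_norm (𝕜 := 𝕜) X Y

lemma Matrix.PosSemidef.re_trace_mul_mul_le {B ρ : Matrix n n 𝕜} (hB : B.PosSemidef)
    (hρ : ρ.PosSemidef) (X : Matrix n n 𝕜) :
    RCLike.re (B * X * ρ).trace ≤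
      √(RCLike.re (B * ρ).trace) * √(RCLike.re (B * (X * ρ * Xᴴ)).trace) := by
  classical
  obtain ⟨C, rfl⟩ := CStarAlgebra.nonneg_iff_eq_star_mul_self.mp hB.nonneg
  have key := hρ.norm_trace_mul_mul_conjTranspose_le C (C * X)
  simp only [star_eq_conjTranspose, conjTranspose_mul] at key ⊢
  have cycle (Z : Matrix n n 𝕜) : (Cᴴ * C * Z).trace = (C * Z * Cᴴ).trace := by
    rw [Matrix.mul_assoc, trace_mul_comm]
  rw [Matrix.mul_assoc _ X, cycle, cycle, cycle]
  simp only [Matrix.mul_assoc] at key ⊢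
  exact (RCLike.re_le_norm _).trans key

end TraceInequalities

section SquareRoot

variable {d : ℕ} {A : Matrix (Fin d) (Fin d) ℂ}

lemma msqrt_eq_cfc (hA : A.PosSemidef) : msqrt A = cfc Real.sqrt A := by
  rw [hA.1.cfc_eq, IsHermitian.cfc, Unitary.conjStarAlgAut_apply, msqrt, dif_pos hA]
  rfl

lemma posSemidef_msqrt (hA : A.PosSemidef) : (msqrt A).PosSemidef := by
  rw [msqrt_eq_cfc hA, ← nonneg_iff_posSemidef]
  exact cfc_nonneg fun x _ => Real.sqrt_nonneg x

lemma le_msqrt_of_le_one (hA : A.PosSemidef) (hA1 : A ≤ 1) : A ≤ msqrt A := by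
  rw [msqrt_eq_cfc hA]
  conv_lhs => rw [← cfc_id' ℝ A]
  refine cfc_mono fun x hx => ?_
  have hx0 : 0 ≤ x := spectrum_nonneg_of_nonneg hA.nonneg hx
  have hx1 : x ≤ 1 := (CFC.le_one_iff (R := ℝ) A).1 hA1 x hx
  exact Real.le_sqrt_of_sq_le (by nlinarith)

end SquareRoot

namespace IsPOVM

variable {d N : ℕ} {A : Fin N → Matrix (Fin d) (Fin d) ℂ}

lemma card_pos (hA : IsPOVM A) (hd : 0 < d) : 0 < N := by
  have : NeZero d := ⟨hd.ne'⟩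
  refine Nat.pos_of_ne_zero fun hN => ?_
  subst hN
  exact one_ne_zero (hA.2.symm.trans (Fin.sum_univ_zero A))

lemma le_one (hA : IsPOVM A) (i : Fin N) : A i ≤ 1 := by
  rw [le_iff, ← hA.2, ← Finset.sum_erase_add _ _ (Finset.mem_univ i), add_sub_cancel_right]
  exact posSemidef_sum _ fun k _ => hA.1 k

lemma sum_re_trace_mul (hA : IsPOVM A) (X : Matrix (Fin d) (Fin d) ℂ) :
    ∑ i, (A i * X).trace.re = X.trace.re := by
  rw [← Complex.re_sum, ← trace_sum, ← Finset.sum_mul, hA.2, Matrix.one_mul]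

lemma one_le_sum_re_trace_msqrt_mul (hA : IsPOVM A) {ρ : Matrix (Fin d) (Fin d) ℂ}
    (hρ : IsDensity ρ) : 1 ≤ ∑ i, (msqrt (A i) * ρ).trace.re :=
  calc 1 = ∑ i, (A i * ρ).trace.re := by rw [hA.sum_re_trace_mul, hρ.2, Complex.one_re]
    _ ≤ _ := Finset.sum_le_sum fun i _ => by
      have h := (le_msqrt_of_le_one (hA.1 i) (hA.le_one i)).re_trace_mul_nonneg hρ.1
      rw [Matrix.sub_mul, trace_sub, map_sub, RCLike.re_to_complex, RCLike.re_to_complex] at h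
      linarith

end IsPOVM

def probLuders {d NA NB : ℕ} (A : Fin NA → Matrix (Fin d) (Fin d) ℂ)
    (B : Fin NB → Matrix (Fin d) (Fin d) ℂ) (ρ : Matrix (Fin d) (Fin d) ℂ) (j : Fin NB) : ℝ :=
  (B j * luders A ρ).trace.re

lemma probLuders_eq_sum {d NA NB : ℕ} (A : Fin NA → Matrix (Fin d) (Fin d) ℂ)
    (B : Fin NB → Matrix (Fin d) (Fin d) ℂ) (ρ : Matrix (Fin d) (Fin d) ℂ) (j : Fin NB) :
    probLuders A B ρ j = ∑ i, (B j * (msqrt (A i) * ρ * msqrt (A i))).trace.re := by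
  rw [probLuders, luders, Finset.mul_sum, trace_sum, Complex.re_sum]

theorem one_le_card_mul_classFid_sq {d NA NB : ℕ} {A : Fin NA → Matrix (Fin d) (Fin d) ℂ}
    {B : Fin NB → Matrix (Fin d) (Fin d) ℂ} (hA : IsPOVM A) (hB : IsPOVM B)
    {ρ : Matrix (Fin d) (Fin d) ℂ} (hρ : IsDensity ρ) :
    1 ≤ NA * classFid (probLuders A B ρ) (probB B ρ) ^ 2 := by
  set S := fun i => msqrt (A i)
  set p := probB B ρ
  set q := probLuders A B ρ
  set qq := fun i j => (B j * (S i * ρ * S i)).trace.re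
  have hS i : (S i).PosSemidef := posSemidef_msqrt (hA.1 i)
  have hp j : 0 ≤ p j := (hB.1 j).re_trace_mul_nonneg hρ.1
  have hqq i j : 0 ≤ qq i j := (hB.1 j).re_trace_mul_nonneg <| by
    simpa only [(hS i).1.eq] using hρ.1.mul_mul_conjTranspose_same (S i)
  have cauchy_schwarz i j : (B j * S i * ρ).trace.re ≤ √(p j) * √(qq i j) := by
    have h := (hB.1 j).re_trace_mul_mul_le hρ.1 (S i)
    rwa [(hS i).1.eq] at h
  have sum_sqrt_le j : ∑ i, √(qq i j) ≤ √NA * √(q j) := by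
    simpa [q, probLuders_eq_sum] using
      Real.sum_sqrt_mul_sqrt_le Finset.univ (fun _ => zero_le_one) (hqq · j)
  have key : 1 ≤ √NA * classFid q p :=
    calc 1 ≤ ∑ i, (S i * ρ).trace.re := hA.one_le_sum_re_trace_msqrt_mul hρ
      _ = ∑ i, ∑ j, (B j * S i * ρ).trace.re := by
        simp_rw [Matrix.mul_assoc, hB.sum_re_trace_mul]
      _ ≤ ∑ i, ∑ j, √(p j) * √(qq i j) := by gcongr with i _ j _; exact cauchy_schwarz i j
      _ = ∑ j, √(p j) * ∑ i, √(qq i j) := by rw [Finset.sum_comm]; simp_rw [Finset.mul_sum]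
      _ ≤ ∑ j, √(p j) * (√NA * √(q j)) := by gcongr with j _; exact sum_sqrt_le j
      _ = √NA * classFid q p := by
        simp only [classFid, Finset.mul_sum, Real.sqrt_mul' _ (hp _)]
        exact Finset.sum_congr rfl fun j _ => by ring
  calc (1 : ℝ) ≤ (√NA * classFid q p) ^ 2 := one_le_pow₀ key
    _ = NA * classFid q p ^ 2 := by rw [mul_pow, Real.sq_sqrt (Nat.cast_nonneg _)]

theorem stmt_17 {d NA NB : ℕ} (hd : 0 < d)
    (A : Fin NA → Matrix (Fin d) (Fin d) ℂ) (B : Fin NB → Matrix (Fin d) (Fin d) ℂ)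
    (hA : IsPOVM A) (hB : IsPOVM B) :
    sSup {x : ℝ | ∃ ρ, IsDensity ρ ∧
        x = 1 - (∑ j, Real.sqrt
          (((B j * luders A ρ).trace).re * ((B j * ρ).trace).re)) ^ 2}
      ≤ 1 - 1 / (NA : ℝ) := by
  have hNA : (1 : ℝ) ≤ NA := Nat.one_le_cast.mpr (hA.card_pos hd)
  refine Real.sSup_le ?_ (sub_nonneg.mpr (div_le_one_of_le₀ hNA (Nat.cast_nonneg _)))
  rintro _ ⟨ρ, hρ, rfl⟩
  rw [sub_le_sub_iff_left, div_le_iff₀' (by positivity)]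
  exact one_le_card_mul_classFid_sq hA hB hρ
end
end
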